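/- arXiv:2106.06246 — 5 statements merged into one kernel-verified Lean document; each statement's English description precedes it below -/
import Mathlib

section
/- Let n be a positive integer, let B be an invertible real symmetric 2n×2n matrix, and let Ω be an invertible real skew-symmetric 2n×2n matrix. If Ω·B is spectrally stable, then the Morse index of B is even. -/
/-!
A real matrix with no eigenvalue in `(-∞, 0]` has positive determinant, since `t ↦ det (t + M)` is
a monic polynomial without roots on `[0, ∞)`. A skew-symmetric `Ω` and a spectrally stable `Ω B`
have no nonzero real eigenvalue, so when invertible both have positive determinant; hence
`det B > 0`, and the sign of `det B` is `-1` raised to the Morse index.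
-/

open Matrix

noncomputable section

/-- The standard symplectic matrix `J = [[0, -Iₙ], [Iₙ, 0]]`. -/
def Jmat (n : ℕ) : Matrix (Fin n ⊕ Fin n) (Fin n ⊕ Fin n) ℝ :=
  Matrix.fromBlocks 0 (-1) 1 0

/-- A real matrix regarded as a complex matrix. -/
def mapC {m : Type*} [Fintype m] [DecidableEq m] (M : Matrix m m ℝ) : Matrix m m ℂ :=
  M.map (algebraMap ℝ ℂ)

/-- `M` is spectrally stable if every complex eigenvalue of `M` is purely imaginary. -/
def spectrallyStable {m : Type*} [Fintype m] [DecidableEq m] (M : Matrix m m ℝ) : Prop :=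
  ∀ z ∈ spectrum ℂ (mapC M), z.re = 0

/-- `M` is semisimple if it is diagonalizable over `ℂ`. -/
def semisimpleC {m : Type*} [Fintype m] [DecidableEq m] (M : Matrix m m ℝ) : Prop :=
  ∃ P : Matrix m m ℂ, IsUnit P ∧ ∃ d : m → ℂ, mapC M = P * Matrix.diagonal d * P⁻¹

/-- The Morse index of a real symmetric matrix: the number of negative eigenvalues,
counted with multiplicity (as roots of the characteristic polynomial). -/
def morseIndex {m : Type*} [Fintype m] [DecidableEq m] (B : Matrix m m ℝ) : ℕ :=
  ((B.charpoly.roots).filter (fun x => x < 0)).card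

/-- The nullity of a real matrix: the dimension of its kernel. -/
def nullity {m : Type*} [Fintype m] [DecidableEq m] (B : Matrix m m ℝ) : ℕ :=
  Module.finrank ℝ (LinearMap.ker B.mulVecLin)

open Polynomial Filter

theorem Polynomial.Monic.eval_pos_of_forall_ge_not_isRoot {p : ℝ[X]} (hp : p.Monic) {a : ℝ}
    (h : ∀ x, a ≤ x → ¬p.IsRoot x) : 0 < p.eval a := by
  by_contra! ha
  have hlarge : ∀ᶠ x in atTop, 0 ≤ p.eval x := by
    rcases eq_or_ne p.natDegree 0 with hdeg | hdeg
    · simp [hp.natDegree_eq_zero.mp hdeg]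
    · have hdeg' : 0 < p.degree := natDegree_pos_iff_degree_pos.mp (Nat.pos_of_ne_zero hdeg)
      exact (p.tendsto_atTop_of_leadingCoeff_nonneg hdeg' (by simp [hp.leadingCoeff]))
        |>.eventually_ge_atTop 0
  obtain ⟨b, hb, hab⟩ := (hlarge.and (eventually_ge_atTop a)).exists
  obtain ⟨x, hx, hroot⟩ := intermediate_value_Icc hab p.continuous.continuousOn ⟨ha, hb⟩
  exact h x hx.1 hroot

theorem Multiset.prod_pos_iff_even_card_filter_neg {R : Type*} [CommRing R] [LinearOrder R]
    [IsStrictOrderedRing R] {s : Multiset R} (hs : ∀ x ∈ s, x ≠ 0) :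
    0 < s.prod ↔ Even (s.filter (· < 0)).card := by
  induction s using Multiset.induction with
  | empty => simp
  | cons a s ih =>
    simp only [Multiset.mem_cons, forall_eq_or_imp] at hs
    have hprod : s.prod ≠ 0 := Multiset.prod_ne_zero fun h => hs.2 0 h rfl
    rw [Multiset.prod_cons, Multiset.filter_cons]
    rcases hs.1.lt_or_gt with ha | ha
    · simp [ha, ha.not_gt, mul_pos_iff, Nat.even_add_one, ← ih hs.2, hprod.le_iff_lt]
    · simp [ha.not_gt, mul_pos_iff_of_pos_left ha, ih hs.2]

namespace Matrix

variable {m : Type*} [Fintype m] [DecidableEq m]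

theorem det_pos_of_forall_mem_spectrum_pos (M : Matrix m m ℝ)
    (h : ∀ x ∈ spectrum ℝ M, 0 < x) : 0 < M.det := by
  have hdet : M.det = (-M).charpoly.eval 0 := by simp [eval_charpoly]
  rw [hdet]
  refine (charpoly_monic _).eval_pos_of_forall_ge_not_isRoot fun x hx hroot => ?_
  rw [← mem_spectrum_iff_isRoot_charpoly, ← spectrum.neg_eq, Set.mem_neg] at hroot
  linarith [h _ hroot]

theorem det_pos_of_spectrum_subset_zero (M : Matrix m m ℝ) (hM : IsUnit M.det)
    (h : spectrum ℝ M ⊆ {0}) : 0 < M.det := by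
  refine det_pos_of_forall_mem_spectrum_pos M fun x hx => ?_
  rw [h hx, spectrum.zero_mem_iff, isUnit_iff_isUnit_det] at hx
  exact absurd hM hx

theorem spectrum_subset_zero_of_transpose_eq_neg {Ω : Matrix m m ℝ} (hΩ : Ωᵀ = -Ω) :
    spectrum ℝ Ω ⊆ {0} := by
  intro x hx
  rw [← spectrum_toLin', ← Module.End.hasEigenvalue_iff_mem_spectrum] at hx
  obtain ⟨v, hv⟩ := hx.exists_hasEigenvector
  have heig : Ω *ᵥ v = x • v := hv.apply_eq_smul
  have hquad : v ⬝ᵥ (Ω *ᵥ v) = 0 := by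
    have : v ⬝ᵥ (Ω *ᵥ v) = -(v ⬝ᵥ (Ω *ᵥ v)) := by
      conv_lhs =>
        rw [dotProduct_mulVec, ← mulVec_transpose, hΩ, neg_mulVec, neg_dotProduct, dotProduct_comm]
    linarith
  rw [heig, dotProduct_smul, smul_eq_mul] at hquad
  exact (mul_eq_zero.mp hquad).resolve_right (dotProduct_self_eq_zero.not.mpr hv.2)

theorem spectrum_subset_zero_of_spectrallyStable {M : Matrix m m ℝ} (hM : spectrallyStable M) :
    spectrum ℝ M ⊆ {0} := by
  intro x hx
  rw [mem_spectrum_iff_isRoot_charpoly] at hx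
  have : (x : ℂ) ∈ spectrum ℂ (mapC M) := by
    rw [mem_spectrum_iff_isRoot_charpoly, mapC, charpoly_map]
    exact hx.map
  simpa using hM _ this

theorem IsSymm.even_morseIndex_iff_det_pos
    {B : Matrix m m ℝ} (hB : B.IsSymm) (hdet : B.det ≠ 0) :
    Even (morseIndex B) ↔ 0 < B.det := by
  have hH : B.IsHermitian := by simpa using hB
  have hdet' : B.det = (Finset.univ.val.map (RCLike.ofReal ∘ hH.eigenvalues)).prod := by
    rw [hH.det_eq_prod_eigenvalues, Finset.prod_eq_multiset_prod]
    rfl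
  rw [morseIndex, hH.roots_charpoly_eq_eigenvalues, hdet']
  rw [hdet'] at hdet
  exact (Multiset.prod_pos_iff_even_card_filter_neg fun x hx h0 =>
    hdet (Multiset.prod_eq_zero (h0 ▸ hx))).symm

end Matrix

theorem stmt_4_general (n : ℕ)
    (B Ω : Matrix (Fin n ⊕ Fin n) (Fin n ⊕ Fin n) ℝ)
    (hB : B.IsSymm) (hBinv : IsUnit B.det)
    (hΩskew : Ωᵀ = -Ω) (hΩinv : IsUnit Ω.det)
    (h : spectrallyStable (Ω * B)) :
    Even (morseIndex B) := by
  have hΩ : 0 < Ω.det :=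
    det_pos_of_spectrum_subset_zero Ω hΩinv (spectrum_subset_zero_of_transpose_eq_neg hΩskew)
  have hΩB : 0 < (Ω * B).det :=
    det_pos_of_spectrum_subset_zero _ (by rw [det_mul]; exact hΩinv.mul hBinv)
      (spectrum_subset_zero_of_spectrallyStable h)
  rw [det_mul] at hΩB
  exact (hB.even_morseIndex_iff_det_pos hBinv.ne_zero).mpr (pos_of_mul_pos_right hΩB hΩ.le)

/-- If `B` is an invertible real symmetric matrix, `Ω` is an invertible real
skew-symmetric matrix, and `Ω·B` is spectrally stable, then the Morse index of `B`
is even. -/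
theorem stmt_4 (n : ℕ) (hn : 0 < n)
    (B Ω : Matrix (Fin n ⊕ Fin n) (Fin n ⊕ Fin n) ℝ)
    (hB : B.IsSymm) (hBinv : IsUnit B.det)
    (hΩskew : Ωᵀ = -Ω) (hΩinv : IsUnit Ω.det)
    (h : spectrallyStable (Ω * B)) :
    Even (morseIndex B) :=
  stmt_4_general n B Ω hB hBinv hΩskew hΩinv h
end
end

section
/- Let n be a positive integer, let B be a real symmetric 2n×2n matrix, let Ω be an invertible real skew-symmetric 2n×2n matrix, and suppose Ω·B is invertible and spectrally stable. Then det(Ω·B) > 0, and consequently det(B) > 0. -/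
/-!
A real matrix of even size with no positive real eigenvalue has nonnegative determinant: for
even size the determinant is the value at `0` of the monic characteristic polynomial, and if
that value were negative the intermediate value theorem would produce a positive root.
Spectrally stable matrices have no nonzero real eigenvalue, and neither do real skew-symmetric
ones, since `i Ω` is Hermitian. Hence `det (Ω B) > 0` and `det Ω ≥ 0`, and
`det (Ω B) = det Ω * det B` forces `det B > 0`.
-/

open Matrix

noncomputable section

open Polynomial in
theorem Polynomial.Monic.eval_zero_nonneg_of_forall_pos_not_isRoot {p : ℝ[X]} (hp : p.Monic)
    (h : ∀ t : ℝ, 0 < t → ¬ p.IsRoot t) : 0 ≤ p.eval 0 := by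
  by_contra! hneg
  have hdeg : 0 < p.degree := hp.degree_pos.mpr (by rintro rfl; norm_num at hneg)
  have htend := tendsto_atTop_of_leadingCoeff_nonneg p hdeg (by simp [hp.leadingCoeff])
  obtain ⟨T, hT, hpT⟩ :=
    ((Filter.eventually_gt_atTop 0).and (htend.eventually_gt_atTop 0)).exists
  obtain ⟨c, ⟨hc, -⟩, hroot⟩ :=
    intermediate_value_Ioo hT.le p.continuous.continuousOn ⟨hneg, hpT⟩
  exact h c hc hroot

theorem Matrix.det_nonneg_of_forall_pos_notMem_spectrum {m : Type*} [Fintype m] [DecidableEq m]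
    (M : Matrix m m ℝ) (hcard : Even (Fintype.card m))
    (h : ∀ t : ℝ, 0 < t → t ∉ spectrum ℝ M) : 0 ≤ M.det := by
  rw [det_eq_sign_charpoly_coeff, hcard.neg_one_pow, one_mul,
    Polynomial.coeff_zero_eq_eval_zero]
  exact M.charpoly_monic.eval_zero_nonneg_of_forall_pos_not_isRoot fun t ht hroot =>
    h t ht (mem_spectrum_iff_isRoot_charpoly.mpr hroot)

theorem eq_zero_of_mem_spectrum_of_spectrallyStable {m : Type*} [Fintype m] [DecidableEq m]
    {M : Matrix m m ℝ} (hM : spectrallyStable M) {t : ℝ} (ht : t ∈ spectrum ℝ M) : t = 0 := by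
  have hroot : (mapC M).charpoly.IsRoot (t : ℂ) := by
    rw [mapC, charpoly_map]
    exact (mem_spectrum_iff_isRoot_charpoly.mp ht).map
  simpa using hM t (mem_spectrum_iff_isRoot_charpoly.mpr hroot)

theorem Matrix.det_nonneg_of_spectrallyStable {m : Type*} [Fintype m] [DecidableEq m]
    (M : Matrix m m ℝ) (hcard : Even (Fintype.card m)) (hM : spectrallyStable M) :
    0 ≤ M.det :=
  M.det_nonneg_of_forall_pos_notMem_spectrum hcard fun _ ht hmem =>
    ht.ne' (eq_zero_of_mem_spectrum_of_spectrallyStable hM hmem)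

theorem conjTranspose_mapC {m : Type*} [Fintype m] [DecidableEq m] (M : Matrix m m ℝ) :
    (mapC M)ᴴ = mapC Mᵀ := by
  ext i j; simp [mapC]

theorem spectrallyStable_of_transpose_eq_neg {m : Type*} [Fintype m] [DecidableEq m]
    {Ω : Matrix m m ℝ} (hΩ : Ωᵀ = -Ω) : spectrallyStable Ω := by
  intro z hz
  have hH : (Complex.I • mapC Ω).IsHermitian := by
    rw [IsHermitian, conjTranspose_smul, conjTranspose_mapC, hΩ]
    ext i j
    simp [mapC]
  have : Complex.I * z ∈ spectrum ℂ (Complex.I • mapC Ω) :=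
    spectrum.smul_mem_smul_iff (r := Units.mk0 _ Complex.I_ne_zero) |>.mpr hz
  rw [hH.spectrum_eq_image_range] at this
  obtain ⟨_, -, hx⟩ := this
  simpa using (congrArg Complex.im hx).symm

theorem stmt_7_general (n : ℕ)
    (B Ω : Matrix (Fin n ⊕ Fin n) (Fin n ⊕ Fin n) ℝ)
    (hΩskew : Ωᵀ = -Ω)
    (hinv : IsUnit (Ω * B).det) (hstab : spectrallyStable (Ω * B)) :
    0 < (Ω * B).det ∧ 0 < B.det := by
  have heven : Even (Fintype.card (Fin n ⊕ Fin n)) := by simp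
  have hΩB : 0 < (Ω * B).det :=
    ((Ω * B).det_nonneg_of_spectrallyStable heven hstab).lt_of_ne' hinv.ne_zero
  have hΩ : 0 ≤ Ω.det :=
    Ω.det_nonneg_of_spectrallyStable heven (spectrallyStable_of_transpose_eq_neg hΩskew)
  refine ⟨hΩB, ?_⟩
  rw [det_mul] at hΩB
  exact pos_of_mul_pos_right hΩB hΩ

/-- If `B` is real symmetric, `Ω` is invertible real skew-symmetric, and `Ω·B` is
invertible and spectrally stable, then `det(Ω·B) > 0` and `det(B) > 0`. -/
theorem stmt_7 (n : ℕ) (hn : 0 < n)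
    (B Ω : Matrix (Fin n ⊕ Fin n) (Fin n ⊕ Fin n) ℝ)
    (hB : B.IsSymm) (hΩskew : Ωᵀ = -Ω) (hΩinv : IsUnit Ω.det)
    (hinv : IsUnit (Ω * B).det) (hstab : spectrallyStable (Ω * B)) :
    0 < (Ω * B).det ∧ 0 < B.det :=
  stmt_7_general n B Ω hΩskew hinv hstab
end
end

section
/- Let n be a positive integer, let B be a real symmetric 2n×2n matrix, and let W be a linear subspace of ℝ^{2n} such that J·W ⊆ W and B·W ⊆ W, and such that the restriction of B to W is injective (hence an isomorphism of W). If J·B is spectrally stable, then the Morse index of B restricted to W is even. -/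
open Matrix

noncomputable section

/-- The Morse index of the symmetric matrix `B` restricted to a `B`-invariant subspace `W`:
the maximal dimension of a linear subspace `U ⊆ W` on which the quadratic form
`x ↦ xᵀ B x` is negative definite. -/
def morseIndexOn {m : Type*} [Fintype m] [DecidableEq m]
    (B : Matrix m m ℝ) (W : Submodule ℝ (m → ℝ)) : ℕ :=
  sSup {k : ℕ | ∃ U : Submodule ℝ (m → ℝ), U ≤ W ∧ Module.finrank ℝ U = k ∧
    ∀ x ∈ U, x ≠ 0 → x ⬝ᵥ B.mulVec x < 0}

/-! On `W` the form `Q(x, y) = xᵀ B y` is nondegenerate and `A = J B` is `Q`-skew-adjoint,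
because `Jᵀ = -J`. Spectral stability and injectivity leave `A|_W` without real eigenvalues,
so `det A|_W > 0`. In a `Q`-orthogonal basis with Gram matrix `G = diag(d)`, the Gram matrix
`AᵀG` of `(x, y) ↦ Q(A x, y)` is skew-symmetric and hence has nonnegative determinant.
Therefore `det G = ∏ dᵢ > 0`, and the number of negative `dᵢ`, which is the Morse index,
is even. -/

open Finset Module Polynomial

theorem Polynomial.Monic.eval_pos_of_forall_not_isRoot {p : ℝ[X]} (hp : p.Monic)
    (h : ∀ x, ¬ p.IsRoot x) (x : ℝ) : 0 < p.eval x := by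
  by_cases hdeg : p.natDegree = 0
  · simp [hp.natDegree_eq_zero.mp hdeg]
  obtain ⟨b, hb⟩ := (Polynomial.tendsto_atTop_of_leadingCoeff_nonneg p
    (by rw [degree_eq_natDegree hp.ne_zero]; exact_mod_cast Nat.pos_of_ne_zero hdeg)
    (by rw [hp.leadingCoeff]; exact zero_le_one)).eventually_gt_atTop 0 |>.exists
  by_contra! hx
  obtain ⟨y, hy⟩ := intermediate_value_univ x b p.continuous ⟨hx, hb.le⟩
  exact h y hy

theorem Finset.even_card_filter_neg_of_prod_pos {ι : Type*} {s : Finset ι} {f : ι → ℝ}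
    (h : 0 < ∏ i ∈ s, f i) : Even #{i ∈ s | f i < 0} := by
  rw [← prod_filter_mul_prod_filter_not s (fun i => f i < 0)] at h
  have hneg : 0 < ∏ i ∈ s with f i < 0, -f i := prod_pos fun i hi => by
    simp only [mem_filter] at hi
    linarith [hi.2]
  have hnonneg : 0 ≤ ∏ i ∈ s with ¬ f i < 0, f i := prod_nonneg fun i hi => by
    simp only [mem_filter, not_lt] at hi
    exact hi.2
  rw [prod_neg] at hneg
  refine (Nat.even_or_odd _).resolve_right fun hodd => ?_
  rw [hodd.neg_one_pow] at hneg
  nlinarith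

namespace Matrix

variable {ι : Type*} [Fintype ι] [DecidableEq ι]

theorem mem_spectrum_iff_exists_mulVec_eq_smul {K : Type*} [Field K] {M : Matrix ι ι K}
    {μ : K} : μ ∈ spectrum K M ↔ ∃ v ≠ 0, M *ᵥ v = μ • v := by
  rw [mem_spectrum_iff_isRoot_charpoly, IsRoot, eval_charpoly, ← exists_mulVec_eq_zero_iff]
  simp [sub_mulVec, sub_eq_zero, eq_comm, scalar_apply]

theorem det_pos_of_spectrum_eq_empty {M : Matrix ι ι ℝ} (hM : spectrum ℝ M = ∅) :
    0 < M.det := by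
  have h : ∀ x, ¬ (-M).charpoly.IsRoot x := fun x hx => by
    rw [← mem_spectrum_iff_isRoot_charpoly, ← spectrum.neg_eq, hM] at hx
    simp at hx
  simpa [eval_charpoly] using (charpoly_monic (-M)).eval_pos_of_forall_not_isRoot h 0

theorem det_nonneg_of_transpose_eq_neg {N : Matrix ι ι ℝ} (hN : Nᵀ = -N) : 0 ≤ N.det := by
  by_cases h0 : N.det = 0
  · exact h0.ge
  refine (det_pos_of_spectrum_eq_empty <| Set.eq_empty_of_forall_notMem fun μ hμ => ?_).le
  obtain ⟨v, hv, hNv⟩ := mem_spectrum_iff_exists_mulVec_eq_smul.mp hμ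
  have hself : v ⬝ᵥ N *ᵥ v = 0 := by
    have : v ⬝ᵥ N *ᵥ v = -(v ⬝ᵥ N *ᵥ v) := by
      conv_lhs => rw [dotProduct_mulVec, ← mulVec_transpose, hN, neg_mulVec, neg_dotProduct,
        dotProduct_comm]
    linarith
  rw [hNv, dotProduct_smul, smul_eq_mul] at hself
  obtain rfl : μ = 0 := (mul_eq_zero.mp hself).resolve_right (by simpa using hv)
  rw [zero_smul] at hNv
  exact h0 (exists_mulVec_eq_zero_iff.mp ⟨v, hv, hNv⟩)

end Matrix

theorem LinearMap.det_pos_of_spectrum_eq_empty {V : Type*} [AddCommGroup V] [Module ℝ V]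
    [FiniteDimensional ℝ V] {f : V →ₗ[ℝ] V} (hf : spectrum ℝ f = ∅) :
    0 < LinearMap.det f := by
  let b := finBasis ℝ V
  rw [← LinearMap.det_toMatrix b]
  exact Matrix.det_pos_of_spectrum_eq_empty <|
    (AlgEquiv.spectrum_eq (toMatrixAlgEquiv b) f).trans hf

namespace LinearMap.BilinForm

section CommRing

variable {R V ι : Type*} [CommRing R] [AddCommGroup V] [Module R V] [Fintype ι] [DecidableEq ι]
  (e : Basis ι R V) {Q : LinearMap.BilinForm R V}

theorem toMatrix_eq_diagonal_of_isOrthoᵢ (he : Q.IsOrthoᵢ e) :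
    toMatrix e Q = diagonal fun i => Q (e i) (e i) := by
  ext i j
  rcases eq_or_ne i j with rfl | hij
  · simp
  · simp [diagonal_apply_ne _ hij, he hij]

theorem apply_self_eq_sum_of_isOrthoᵢ (he : Q.IsOrthoᵢ e) (x : V) :
    Q x x = ∑ i, Q (e i) (e i) * e.repr x i ^ 2 := by
  rw [apply_eq_dotProduct_toMatrix_mulVec e, toMatrix_eq_diagonal_of_isOrthoᵢ e he]
  simp only [dotProduct, mulVec_diagonal]
  exact sum_congr rfl fun i _ => by ring

end CommRing

variable {V ι : Type*} [AddCommGroup V] [Module ℝ V]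

def negIndex (Q : LinearMap.BilinForm ℝ V) : ℕ :=
  sSup {k | ∃ U : Submodule ℝ V, finrank ℝ U = k ∧ ∀ x ∈ U, x ≠ 0 → Q x x < 0}

variable [Fintype ι] [DecidableEq ι] (e : Basis ι ℝ V) {Q : LinearMap.BilinForm ℝ V}

theorem negIndex_eq_card_of_isOrthoᵢ (he : Q.IsOrthoᵢ e) :
    Q.negIndex = #{i | Q (e i) (e i) < 0} := by
  set S : Finset ι := {i | Q (e i) (e i) < 0}
  have hS : ∀ i, i ∈ S ↔ Q (e i) (e i) < 0 := by simp [S]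
  refine IsGreatest.csSup_eq ⟨⟨Submodule.span ℝ (e '' S), ?_, fun x hx hx0 => ?_⟩, ?_⟩
  · rw [Set.image_eq_range]
    exact (finrank_span_eq_card (e.linearIndependent.comp _ Subtype.val_injective)).trans
      (by simp)
  · rw [e.mem_span_image] at hx
    obtain ⟨i, hi⟩ : ∃ i, e.repr x i ≠ 0 := by
      by_contra! h
      exact hx0 (e.ext_elem fun i => by simp [h i])
    rw [apply_self_eq_sum_of_isOrthoᵢ e he]
    refine sum_neg' (fun j _ => ?_) ⟨i, mem_univ i, ?_⟩
    · by_cases hj : e.repr x j = 0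
      · simp [hj]
      · exact mul_nonpos_of_nonpos_of_nonneg ((hS j).mp (hx (by simpa using hj))).le
          (sq_nonneg _)
    · exact mul_neg_of_neg_of_pos ((hS i).mp (hx (by simpa using hi))) (by positivity)
  · rintro k ⟨U, rfl, hU⟩
    -- a negative definite subspace meets `span {e i | i ∉ S}`, where `Q ≥ 0`, trivially
    let φ : U →ₗ[ℝ] S → ℝ := LinearMap.pi fun i => e.coord i ∘ₗ U.subtype
    have hφ : Function.Injective φ := by
      rw [← LinearMap.ker_eq_bot, LinearMap.ker_eq_bot']
      intro x hx
      by_contra hx0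
      refine (hU x x.2 (by simpa using hx0)).not_ge ?_
      rw [apply_self_eq_sum_of_isOrthoᵢ e he]
      refine sum_nonneg fun j _ => ?_
      by_cases hj : j ∈ S
      · simp [show e.repr x j = 0 from congrFun hx ⟨j, hj⟩]
      · exact mul_nonneg (not_lt.mp ((hS j).not.mp hj)) (sq_nonneg _)
    simpa using LinearMap.finrank_le_finrank_of_injective hφ

theorem det_toMatrix_nonneg_of_isSkewAdjoint (hQ : Q.IsSymm) {A : V →ₗ[ℝ] V}
    (hA : Q.IsSkewAdjoint A) (hAspec : spectrum ℝ A = ∅) : 0 ≤ (toMatrix e Q).det := by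
  have : FiniteDimensional ℝ V := e.finiteDimensional_of_finite
  have hskew : (toMatrix e (Q.compLeft A))ᵀ = -toMatrix e (Q.compLeft A) := by
    ext i j
    simp [hA (e j) (e i), hQ.eq (e j)]
  have hdet := Matrix.det_nonneg_of_transpose_eq_neg hskew
  rw [toMatrix_compLeft, det_mul, det_transpose, LinearMap.det_toMatrix] at hdet
  exact nonneg_of_mul_nonneg_right hdet (LinearMap.det_pos_of_spectrum_eq_empty hAspec)

end LinearMap.BilinForm

section Restrict

variable {m : Type*} [Fintype m] [DecidableEq m] {W : Submodule ℝ (m → ℝ)}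

theorem morseIndexOn_eq_negIndex_restrict (B : Matrix m m ℝ) :
    morseIndexOn B W = ((toBilin' B).restrict W).negIndex := by
  unfold morseIndexOn LinearMap.BilinForm.negIndex
  congr 1
  ext k
  constructor
  · rintro ⟨U, hUW, rfl, hU⟩
    refine ⟨U.comap W.subtype, (Submodule.comapSubtypeEquivOfLe hUW).finrank_eq, ?_⟩
    intro x hx hx0
    simpa [toBilin'_apply'] using hU x hx (by simpa using hx0)
  · rintro ⟨U, rfl, hU⟩
    refine ⟨U.map W.subtype, Submodule.map_subtype_le W U,
      Submodule.finrank_map_subtype_eq W U, ?_⟩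
    rintro _ ⟨x, hx, rfl⟩ hx0
    simpa [toBilin'_apply'] using hU x hx (by simpa using hx0)

theorem nondegenerate_restrict_toBilin' {B : Matrix m m ℝ} (hB : B.IsSymm)
    (hBW : W.map B.mulVecLin ≤ W) (hBinj : ∀ x ∈ W, B *ᵥ x = 0 → x = 0) :
    ((toBilin' B).restrict W).Nondegenerate := by
  refine (LinearMap.BilinForm.isSymm_iff.mp ((isSymm_toBilin'_iff_isSymm.mpr hB).restrict W)
    ).isRefl.nondegenerate_iff_separatingLeft.mpr fun x hx => ?_
  have hBx : B *ᵥ (x : m → ℝ) ∈ W := hBW (Submodule.mem_map_of_mem x.2)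
  have : (B *ᵥ (x : m → ℝ)) ⬝ᵥ (B *ᵥ (x : m → ℝ)) = 0 := by
    simpa [toBilin'_apply', dotProduct_mulVec, ← mulVec_transpose, hB.eq] using hx ⟨_, hBx⟩
  exact Subtype.ext (hBinj x x.2 (dotProduct_self_eq_zero.mp this))

theorem isSkewAdjoint_restrict_toBilin' {B J : Matrix m m ℝ} (hB : B.IsSymm) (hJ : Jᵀ = -J)
    (hW : ∀ x ∈ W, (J * B).mulVecLin x ∈ W) :
    ((toBilin' B).restrict W).IsSkewAdjoint ((J * B).mulVecLin.restrict hW) := by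
  intro x y
  simp only [LinearMap.BilinForm.restrict_apply, LinearMap.domRestrict_apply,
    LinearMap.coe_restrict_apply, toBilin'_apply', Pi.neg_apply, NegMemClass.coe_neg,
    mulVecLin_apply]
  rw [mulVec_neg, dotProduct_comm, dotProduct_mulVec, ← mulVec_transpose, mulVec_mulVec,
    mulVec_mulVec, transpose_mul, hJ, hB.eq, dotProduct_comm]
  simp [Matrix.mul_assoc, neg_mulVec]

theorem spectrum_restrict_eq_empty {M : Matrix m m ℝ} (hM : spectrallyStable M)
    (hW : ∀ x ∈ W, M.mulVecLin x ∈ W) (hinj : ∀ x ∈ W, M *ᵥ x = 0 → x = 0) :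
    spectrum ℝ (M.mulVecLin.restrict hW) = ∅ := by
  refine Set.eq_empty_of_forall_notMem fun μ hμ => ?_
  obtain ⟨x, hx, hx0⟩ :=
    (Module.End.hasEigenvalue_iff_mem_spectrum.mpr hμ).exists_hasEigenvector
  have hMx : M *ᵥ (x : m → ℝ) = μ • (x : m → ℝ) :=
    congrArg Subtype.val (Module.End.mem_eigenspace_iff.mp hx)
  have hμR : μ ∈ spectrum ℝ M :=
    mem_spectrum_iff_exists_mulVec_eq_smul.mpr ⟨x, by simpa using hx0, hMx⟩
  have hμC : (μ : ℂ) ∈ spectrum ℂ (mapC M) := by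
    rw [mem_spectrum_iff_isRoot_charpoly] at hμR
    rw [mem_spectrum_iff_isRoot_charpoly, mapC, charpoly_map]
    exact hμR.map
  obtain rfl : μ = 0 := by simpa using hM _ hμC
  rw [zero_smul] at hMx
  exact hx0 (Subtype.ext (hinj x x.2 hMx))

end Restrict

theorem Jmat_transpose (n : ℕ) : (Jmat n)ᵀ = -Jmat n := by
  simp [Jmat, fromBlocks_transpose, fromBlocks_neg]

theorem Jmat_mul_self (n : ℕ) : Jmat n * Jmat n = -1 := by
  simp [Jmat, fromBlocks_multiply, ← fromBlocks_one, fromBlocks_neg]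

theorem stmt_8_general (n : ℕ)
    (B : Matrix (Fin n ⊕ Fin n) (Fin n ⊕ Fin n) ℝ) (hB : B.IsSymm)
    (W : Submodule ℝ ((Fin n ⊕ Fin n) → ℝ))
    (hJW : W.map (Jmat n).mulVecLin ≤ W)
    (hBW : W.map B.mulVecLin ≤ W)
    (hBinj : ∀ x ∈ W, B.mulVec x = 0 → x = 0)
    (hstab : spectrallyStable (Jmat n * B)) :
    Even (morseIndexOn B W) := by
  set Q := (toBilin' B).restrict W
  have hQ : Q.IsSymm := (isSymm_toBilin'_iff_isSymm.mpr hB).restrict W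
  obtain ⟨e, he⟩ :=
    LinearMap.BilinForm.exists_orthogonal_basis (LinearMap.BilinForm.isSymm_iff.mp hQ)
  have hJBW : ∀ x ∈ W, (Jmat n * B).mulVecLin x ∈ W := fun x hx => by
    rw [mulVecLin_apply, ← mulVec_mulVec]
    exact hJW (Submodule.mem_map_of_mem (hBW (Submodule.mem_map_of_mem hx)))
  have hJBinj : ∀ x ∈ W, (Jmat n * B) *ᵥ x = 0 → x = 0 := fun x hx h => by
    refine hBinj x hx ?_
    simpa [mulVec_mulVec, ← Matrix.mul_assoc, Jmat_mul_self, neg_mulVec] using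
      congrArg (Jmat n *ᵥ ·) h
  have hdet : 0 < (LinearMap.BilinForm.toMatrix e Q).det :=
    (LinearMap.BilinForm.det_toMatrix_nonneg_of_isSkewAdjoint e hQ
      (isSkewAdjoint_restrict_toBilin' hB (Jmat_transpose n) hJBW)
      (spectrum_restrict_eq_empty hstab hJBW hJBinj)).lt_of_ne'
      ((LinearMap.BilinForm.nondegenerate_iff_det_ne_zero e).mp
        (nondegenerate_restrict_toBilin' hB hBW hBinj))
  rw [LinearMap.BilinForm.toMatrix_eq_diagonal_of_isOrthoᵢ e he, det_diagonal] at hdet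
  rw [morseIndexOn_eq_negIndex_restrict, LinearMap.BilinForm.negIndex_eq_card_of_isOrthoᵢ e he]
  exact even_card_filter_neg_of_prod_pos hdet

/-- Let `W` be a `J`-invariant and `B`-invariant subspace on which `B` is injective
(hence an isomorphism of `W`). If `J·B` is spectrally stable, then the Morse index of
`B` restricted to `W` is even. -/
theorem stmt_8 (n : ℕ) (hn : 0 < n)
    (B : Matrix (Fin n ⊕ Fin n) (Fin n ⊕ Fin n) ℝ) (hB : B.IsSymm)
    (W : Submodule ℝ ((Fin n ⊕ Fin n) → ℝ))
    (hJW : W.map (Jmat n).mulVecLin ≤ W)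
    (hBW : W.map B.mulVecLin ≤ W)
    (hBinj : ∀ x ∈ W, B.mulVec x = 0 → x = 0)
    (hstab : spectrallyStable (Jmat n * B)) :
    Even (morseIndexOn B W) :=
  stmt_8_general n B hB W hJW hBW hBinj hstab
end
end

section
/- Every invertible real skew-symmetric 2n×2n matrix Ω can be written as Ω = Q·J·Qᵀ for some invertible real 2n×2n matrix Q. -/
/-! A nondegenerate alternating form `B` has a symplectic basis. Choose `e, f` with `B f e = 1`:
their Gram matrix is invertible, so `W = span {e, f}` meets its `B`-orthogonal `U` trivially, `B`
stays nondegenerate on `U`, and `dim U = dim V - 2`; a symplectic basis of `U` by induction,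
preceded by `e, f`, is one of `V`. For `B = toBilin' Ω` the Gram matrix in that basis is `J`, and
the change of basis to the standard one gives `Ω = Q J Qᵀ`. -/

open Matrix

noncomputable section

open Module Submodule
open LinearMap (BilinForm)

theorem Matrix.isAlt_toBilin'_of_transpose_eq_neg {R ι : Type*} [CommRing R]
    [IsAddTorsionFree R] [Fintype ι] [DecidableEq ι] {Ω : Matrix ι ι R} (hskew : Ωᵀ = -Ω) :
    (toBilin' Ω).IsAlt := by
  intro x
  rw [toBilin'_apply', ← self_eq_neg]
  calc x ⬝ᵥ Ω *ᵥ x = Ωᵀ *ᵥ x ⬝ᵥ x := by rw [mulVec_transpose, dotProduct_mulVec]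
    _ = -(x ⬝ᵥ Ω *ᵥ x) := by rw [hskew, neg_mulVec, neg_dotProduct, dotProduct_comm]

theorem Matrix.isUnit_J (l R : Type*) [DecidableEq l] [Fintype l] [CommRing R] :
    IsUnit (J l R) :=
  (isUnit_iff_isUnit_det _).2 (isUnit_det_J l R)

namespace LinearMap.BilinForm

variable {K V : Type*} [Field K] [AddCommGroup V] [Module K V]

def gram {ι : Type*} (B : BilinForm K V) (v : ι → V) : Matrix ι ι K :=
  Matrix.of fun i j => B (v i) (v j)

section Gram

variable {ι : Type*} [Fintype ι] (B : BilinForm K V) (v : ι → V)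

theorem apply_sum_smul_left (c : ι → K) (j : ι) :
    B (∑ i, c i • v i) (v j) = (c ᵥ* gram B v) j := by
  simp [gram, vecMul, dotProduct]

variable [DecidableEq ι] {B v}

theorem eq_zero_of_apply_sum_smul_eq_zero (h : IsUnit (gram B v)) {c : ι → K}
    (hc : ∀ j, B (∑ i, c i • v i) (v j) = 0) : c = 0 :=
  vecMul_injective_of_isUnit h <| funext fun j => by
    change (c ᵥ* gram B v) j = (0 ᵥ* gram B v) j
    rw [zero_vecMul, Pi.zero_apply, ← apply_sum_smul_left, hc]

theorem linearIndependent_of_isUnit_gram (h : IsUnit (gram B v)) : LinearIndependent K v :=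
  Fintype.linearIndependent_iff.2 fun c hc =>
    congrFun <| eq_zero_of_apply_sum_smul_eq_zero h fun j => by
      rw [hc, map_zero, LinearMap.zero_apply]

theorem disjoint_span_orthogonal_of_isUnit_gram (hB : B.IsRefl) (h : IsUnit (gram B v)) :
    Disjoint (span K (Set.range v)) (B.orthogonal (span K (Set.range v))) := by
  refine disjoint_def.2 fun z hz hz' => ?_
  obtain ⟨c, rfl⟩ := (mem_span_range_iff_exists_fun K).1 hz
  obtain rfl : c = 0 := eq_zero_of_apply_sum_smul_eq_zero h fun j =>
    hB _ _ (mem_orthogonal_iff.1 hz' (v j) (subset_span (Set.mem_range_self j)))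
  simp

end Gram

variable {B : BilinForm K V}

theorem exists_apply_eq_one [Nontrivial V] (hN : B.Nondegenerate) : ∃ x y, B x y = 1 := by
  obtain ⟨x, hx⟩ := exists_ne (0 : V)
  obtain ⟨z, hz⟩ : ∃ z, B x z ≠ 0 := by
    by_contra! h
    exact hx (hN.1 x h)
  exact ⟨x, (B x z)⁻¹ • z, by rw [map_smul, smul_eq_mul, inv_mul_cancel₀ hz]⟩

theorem gram_cons_eq_J (hA : B.IsAlt) {e f : V} (hfe : B f e = 1) {k : ℕ}
    {u : Fin k ⊕ Fin k → V} (he : ∀ i, B e (u i) = 0) (hf : ∀ i, B f (u i) = 0)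
    (hu : gram B u = J (Fin k) K) :
    gram B (Sum.elim (Fin.cons e (u ∘ Sum.inl)) (Fin.cons f (u ∘ Sum.inr))) =
      J (Fin (k + 1)) K := by
  have hue : ∀ i, B (u i) e = 0 := fun i => hA.isRefl _ _ (he i)
  have huf : ∀ i, B (u i) f = 0 := fun i => hA.isRefl _ _ (hf i)
  have hef : B e f = -1 := by rw [← hA.neg_eq f e, hfe]
  have huu : ∀ i j, B (u i) (u j) = J (Fin k) K i j := fun i j => congrFun₂ hu i j
  ext (i | i) (j | j) <;> cases i using Fin.cases <;> cases j using Fin.cases <;>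
    simp [gram, J, hA.self_eq_zero, he, hf, hue, huf, hef, hfe, huu, one_apply,
      (Fin.succ_ne_zero _).symm]

theorem exists_gram_eq_J [FiniteDimensional K V] (hA : B.IsAlt) (hN : B.Nondegenerate) :
    ∃ (k : ℕ) (v : Fin k ⊕ Fin k → V),
      Fintype.card (Fin k ⊕ Fin k) = finrank K V ∧ gram B v = J (Fin k) K := by
  induction hm : finrank K V using Nat.strong_induction_on generalizing V with
  | _ m ih =>
  rcases subsingleton_or_nontrivial V with hV | hV
  · exact ⟨0, Sum.elim Fin.elim0 Fin.elim0, by simp [← hm, finrank_zero_of_subsingleton],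
      Subsingleton.elim _ _⟩
  obtain ⟨f, e, hfe⟩ := exists_apply_eq_one hN
  set p : Fin 1 ⊕ Fin 1 → V := Sum.elim (fun _ => e) (fun _ => f)
  have hp : gram B p = J (Fin 1) K := by
    ext (i | i) (j | j) <;>
      simp [p, gram, J, hfe, hA.self_eq_zero, ← hA.neg_eq f e, one_apply, Subsingleton.elim i j]
  set W := span K (Set.range p)
  have hW : finrank K W = 2 := by
    rw [finrank_span_eq_card (linearIndependent_of_isUnit_gram (hp ▸ isUnit_J _ _))]
    simp
  set U := B.orthogonal W
  have hU : finrank K U = m - 2 := by rw [finrank_orthogonal hN, hW, hm]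
  have hUnd : (B.restrict U).Nondegenerate := by
    refine B.nondegenerate_restrict_of_disjoint_orthogonal hA.isRefl ?_
    rw [orthogonal_orthogonal hN hA.isRefl]
    exact (disjoint_span_orthogonal_of_isUnit_gram hA.isRefl (hp ▸ isUnit_J _ _)).symm
  have hm2 : 2 ≤ m := hm ▸ hW ▸ Submodule.finrank_le W
  obtain ⟨k, u, hcard, hu⟩ :=
    ih (m - 2) (by omega) (V := U) (B := B.restrict U) (fun x => hA.self_eq_zero x) hUnd hU
  refine ⟨k + 1, _, ?_, gram_cons_eq_J hA hfe (u := Subtype.val ∘ u) ?_ ?_ hu⟩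
  · simp only [Fintype.card_sum, Fintype.card_fin] at hcard ⊢
    omega
  · exact fun i => (u i).2 e (subset_span ⟨Sum.inl 0, rfl⟩)
  · exact fun i => (u i).2 f (subset_span ⟨Sum.inr 0, rfl⟩)

theorem exists_basis_toMatrix_eq_J [FiniteDimensional K V] (hA : B.IsAlt)
    (hN : B.Nondegenerate) :
    ∃ (k : ℕ) (b : Basis (Fin k ⊕ Fin k) K V), toMatrix b B = J (Fin k) K := by
  obtain ⟨k, v, hcard, hv⟩ := exists_gram_eq_J hA hN
  have hli := linearIndependent_of_isUnit_gram (hv ▸ isUnit_J _ _)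
  refine ⟨k, basisOfLinearIndependentOfCardEqFinrank' v hli hcard, ?_⟩
  ext i j
  rw [toMatrix_apply, coe_basisOfLinearIndependentOfCardEqFinrank']
  exact congrFun₂ hv i j

end LinearMap.BilinForm

open LinearMap.BilinForm

/-- Every invertible real skew-symmetric `2n × 2n` matrix `Ω` can be written as
`Ω = Q · J · Qᵀ` for some invertible real matrix `Q`. -/
theorem stmt_14 (n : ℕ)
    (Ω : Matrix (Fin n ⊕ Fin n) (Fin n ⊕ Fin n) ℝ)
    (hskew : Ωᵀ = -Ω) (hdet : Ω.det ≠ 0) :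
    ∃ Q : Matrix (Fin n ⊕ Fin n) (Fin n ⊕ Fin n) ℝ,
      IsUnit Q.det ∧ Ω = Q * Jmat n * Qᵀ := by
  obtain ⟨k, b, hb⟩ := exists_basis_toMatrix_eq_J (isAlt_toBilin'_of_transpose_eq_neg hskew)
    (nondegenerate_toBilin'_of_det_ne_zero' Ω hdet)
  obtain rfl : n = k := by
    have := (finrank_eq_card_basis b).symm.trans (finrank_eq_card_basis (Pi.basisFun ℝ _))
    simp only [Fintype.card_sum, Fintype.card_fin] at this
    omega
  let std := Pi.basisFun ℝ (Fin n ⊕ Fin n)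
  have := b.invertibleToMatrix std
  refine ⟨(b.toMatrix std)ᵀ, by rw [det_transpose]; exact isUnit_det_of_invertible _, ?_⟩
  rw [transpose_transpose, show Jmat n = J (Fin n) ℝ from rfl, ← hb,
    toMatrix_mul_basis_toMatrix, toMatrix_basisFun, toMatrix'_toBilin']
end
end

section
/- Let α and ξ be real numbers and let M be the 4×4 real matrix with rows (0, -ξ, 1, 0), (ξ, 0, 0, 1), ((α+1)ξ², 0, 0, -ξ), (0, -ξ², ξ, 0). Then the characteristic polynomial of M equals λ⁴ - (α-2)·ξ²·λ², so the complex eigenvalues of M are 0 (with multiplicity two) and ±√(α-2)·ξ. In particular, if α > 2 and ξ ≠ 0, then M has a positive real eigenvalue. -/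
/-! Cofactor expansion, valid over any commutative ring, gives the biquadratic `X⁴ - c X²` with
`c = (α - 2) ξ²`. It factors as `X² (X² - c)`, so its roots are `0`, double when `c ≠ 0`, and the
square roots of `c`; for `α > 2`, `ξ ≠ 0` the number `c` is positive and `√c` is an eigenvalue. -/

open Matrix Polynomial

noncomputable section

def stabilityMatrix {R : Type*} [CommRing R] (α ξ : R) : Matrix (Fin 4) (Fin 4) R :=
  !![0, -ξ, 1, 0;
     ξ, 0, 0, 1;
     (α + 1) * ξ ^ 2, 0, 0, -ξ;
     0, -ξ ^ 2, ξ, 0]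

theorem charpoly_stabilityMatrix {R : Type*} [CommRing R] (α ξ : R) :
    (stabilityMatrix α ξ).charpoly = X ^ 4 - C ((α - 2) * ξ ^ 2) * X ^ 2 := by
  have hcharmatrix : charmatrix (stabilityMatrix α ξ) =
      !![X, C ξ, -1, 0;
         -C ξ, X, 0, -1;
         -C ((α + 1) * ξ ^ 2), 0, X, C ξ;
         0, C (ξ ^ 2), -C ξ, X] := by
    ext i j
    fin_cases i <;> fin_cases j <;> simp [stabilityMatrix]
  rw [Matrix.charpoly, hcharmatrix]
  simp [Fin.sum_univ_succ, det_succ_row_zero, Fin.succAbove, map_ofNat]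
  ring

theorem isRoot_X_pow_four_sub_C_mul_X_sq_iff {R : Type*} [CommRing R] [NoZeroDivisors R]
    {c z : R} : (X ^ 4 - C c * X ^ 2 : R[X]).IsRoot z ↔ z = 0 ∨ z ^ 2 = c := by
  have heval : (X ^ 4 - C c * X ^ 2 : R[X]).eval z = z ^ 2 * (z ^ 2 - c) := by simp; ring
  rw [IsRoot, heval, mul_eq_zero, pow_eq_zero_iff two_ne_zero, sub_eq_zero]

theorem rootMultiplicity_zero_X_pow_four_sub_C_mul_X_sq {R : Type*} [CommRing R] {c : R}
    (hc : c ≠ 0) : (X ^ 4 - C c * X ^ 2 : R[X]).rootMultiplicity 0 = 2 := by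
  have hfactor : (X ^ 4 - C c * X ^ 2 : R[X]) = (X ^ 2 - C c) * (X - C 0) ^ 2 := by
    simp only [map_zero, sub_zero]; ring
  have hroot : ¬(X ^ 2 - C c : R[X]).IsRoot 0 := by simpa [IsRoot] using hc
  rw [hfactor, rootMultiplicity_mul_X_sub_C_pow (fun h => hroot (by simp [h])),
    rootMultiplicity_eq_zero hroot, zero_add]

/-- The 4×4 matrix from the n-body-type problem has characteristic polynomial
`λ⁴ - (α-2)ξ²λ²`; its complex eigenvalues are `0` (with multiplicity two, when
`(α-2)ξ² ≠ 0`) and the two square roots of `(α-2)ξ²`. In particular, if `α > 2` and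
`ξ ≠ 0`, then it has a positive real eigenvalue. -/
theorem stmt_17 (α ξ : ℝ)
    (M : Matrix (Fin 4) (Fin 4) ℝ)
    (hM : M = !![0, -ξ, 1, 0;
                 ξ, 0, 0, 1;
                 (α + 1) * ξ ^ 2, 0, 0, -ξ;
                 0, -ξ ^ 2, ξ, 0]) :
    M.charpoly = X ^ 4 - C ((α - 2) * ξ ^ 2) * X ^ 2 ∧
    (∀ z : ℂ, z ∈ spectrum ℂ (mapC M) ↔ z = 0 ∨ z ^ 2 = (((α - 2) * ξ ^ 2 : ℝ) : ℂ)) ∧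
    ((α - 2) * ξ ^ 2 ≠ 0 →
      (M.charpoly.map (algebraMap ℝ ℂ)).rootMultiplicity 0 = 2) ∧
    (2 < α → ξ ≠ 0 → ∃ r : ℝ, 0 < r ∧ (r : ℂ) ∈ spectrum ℂ (mapC M)) := by
  obtain rfl : M = stabilityMatrix α ξ := hM
  have hcharpoly := charpoly_stabilityMatrix α ξ
  have hcharpolyC : (stabilityMatrix α ξ).charpoly.map (algebraMap ℝ ℂ) =
      X ^ 4 - C (((α - 2) * ξ ^ 2 : ℝ) : ℂ) * X ^ 2 := by
    simp [hcharpoly]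
  have hspectrum (z : ℂ) :
      z ∈ spectrum ℂ (mapC (stabilityMatrix α ξ)) ↔
        z = 0 ∨ z ^ 2 = (((α - 2) * ξ ^ 2 : ℝ) : ℂ) := by
    rw [mem_spectrum_iff_isRoot_charpoly, mapC, charpoly_map, hcharpolyC,
      isRoot_X_pow_four_sub_C_mul_X_sq_iff]
  refine ⟨hcharpoly, hspectrum, fun hc => ?_, fun hα hξ => ?_⟩
  · rw [hcharpolyC]
    exact rootMultiplicity_zero_X_pow_four_sub_C_mul_X_sq (Complex.ofReal_ne_zero.mpr hc)
  · have hc : 0 < (α - 2) * ξ ^ 2 := mul_pos (sub_pos.mpr hα) (by positivity)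
    refine ⟨√((α - 2) * ξ ^ 2), Real.sqrt_pos.mpr hc, (hspectrum _).mpr (Or.inr ?_)⟩
    rw [← Complex.ofReal_pow, Real.sq_sqrt hc.le]
end
end
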